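/- arXiv:2010.09580 — 3 statements merged into one kernel-verified Lean document; each statement's English description precedes it below -/
import Mathlib

section
/- Let P ⊆ ℍ^d be a finite set, let I ⊆ [d], and let x ∈ ℍ^d with I ⊆ Dom(x). Then f^I_2(P, x) ≤ f^I_2(P, c(P)) + |PD(P, I)|·d(x, c(P))². -/
open Finset

namespace KMD

/-- A point in `ℍ^d`: each coordinate is either a real number or missing (`none`). -/
abbrev HPt (d : ℕ) := Fin d → Option ℝ

variable {d : ℕ}

/-- The domain of a point: the set of coordinates where it is specified. -/
noncomputable def Dom (x : HPt d) : Finset (Fin d) := Finset.univ.filter fun i => x i ≠ none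

/-- The number of missing coordinates of a point. -/
noncomputable def numMissing (x : HPt d) : ℕ := (Finset.univ.filter fun i => x i = none).card

/-- A `Δ`-point: at most `Δ` coordinates are missing. -/
def IsDeltaPt (Δ : ℕ) (x : HPt d) : Prop := numMissing x ≤ Δ

/-- `(a - b)^2`, with the convention that it is `0` when either entry is missing. -/
def coordSq : Option ℝ → Option ℝ → ℝ
  | some a, some b => (a - b) ^ 2
  | _, _ => 0

/-- `d^I(x,y)`. -/
noncomputable def dI (I : Finset (Fin d)) (x y : HPt d) : ℝ :=
  Real.sqrt (∑ i ∈ I, coordSq (x i) (y i))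

/-- `d(x,y) = d^{[d]}(x,y)`. -/
noncomputable def dH (x y : HPt d) : ℝ := dI Finset.univ x y

/-- `PD(S, I)`: points of `S` partially defined on `I`. -/
noncomputable def PD (S : Finset (HPt d)) (I : Finset (Fin d)) : Finset (HPt d) :=
  S.filter fun x => (Dom x ∩ I).Nonempty

/-- `FD(S, I)`: points of `S` fully defined on `I`. -/
noncomputable def FD (S : Finset (HPt d)) (I : Finset (Fin d)) : Finset (HPt d) :=
  S.filter fun x => Dom x ⊆ I

/-- The mean `c^I(P)` of `P` on the coordinates of `I` (unspecified outside `I`). -/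
noncomputable def cI (I : Finset (Fin d)) (P : Finset (HPt d)) : HPt d := fun i =>
  if i ∈ I ∧ (PD P {i}).Nonempty then
    some ((∑ x ∈ PD P {i}, (x i).getD 0) / (PD P {i}).card)
  else none

/-- `c(P) = c^{[d]}(P)`. -/
noncomputable def cP (P : Finset (HPt d)) : HPt d := cI Finset.univ P

/-- `f^I_2(X, y) = Σ_{x ∈ X} d^I(x,y)^2`. -/
noncomputable def f2I (I : Finset (Fin d)) (X : Finset (HPt d)) (y : HPt d) : ℝ :=
  ∑ x ∈ X, dI I x y ^ 2

/-- `f_2 = f^{[d]}_2`. -/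
noncomputable def f2 (X : Finset (HPt d)) (y : HPt d) : ℝ := f2I Finset.univ X y

/-- A partial clustering of the instance `P` of `Δ`-points, with `k` clusters. -/
structure PartialClustering (d Δ k : ℕ) (P : Finset (HPt d)) where
  n : Fin k → ℕ
  H : Fin k → Finset (HPt d)
  I : Fin k → Finset (Fin d)
  u : Fin k → HPt d
  H_sub : ∀ i, H i ⊆ P
  n_le : ∀ i, n i ≤ Δ + 1
  dom_u : ∀ i, Dom (u i) = I i
  I_card : ∀ i, 0 < n i → d - Δ + (n i - 1) ≤ (I i).card
  I_empty : ∀ i, n i = 0 → I i = ∅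
  H_empty : ∀ i, n i = 0 → H i = ∅

variable {Δ k : ℕ} {P : Finset (HPt d)}

/-- `R = P − ∪_i H_i`: the points not yet assigned to a cluster. -/
noncomputable def Rset (pc : PartialClustering d Δ k P) : Finset (HPt d) :=
  P \ Finset.univ.biUnion pc.H

/-- An extension of a partial clustering: a partition `(Q i)` of `P` with `H i ⊆ Q i`. -/
def IsExtension (pc : PartialClustering d Δ k P) (Q : Fin k → Finset (HPt d)) : Prop :=
  (∀ i, pc.H i ⊆ Q i) ∧ (∀ i, Q i ⊆ P) ∧
    (∀ i j, i ≠ j → Disjoint (Q i) (Q j)) ∧ ∀ x ∈ P, ∃ i, x ∈ Q i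

/-- The centers associated with an extension: `c'_i` agrees with `u i` on `I i`
and with the mean of `Q i` outside `I i`. -/
noncomputable def centers (pc : PartialClustering d Δ k P)
    (Q : Fin k → Finset (HPt d)) (i : Fin k) : HPt d :=
  fun r => if r ∈ pc.I i then pc.u i r else cP (Q i) r

/-- The value of an extension. -/
noncomputable def extVal (pc : PartialClustering d Δ k P)
    (Q : Fin k → Finset (HPt d)) : ℝ :=
  ∑ i, f2 (Q i) (centers pc Q i)

/-- `OPT(pc)`: the minimum value over all extensions of `pc`. -/
noncomputable def OPT (pc : PartialClustering d Δ k P) : ℝ :=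
  sInf (extVal pc '' {Q | IsExtension pc Q})

/-- An optimal extension. -/
def IsOptimalExtension (pc : PartialClustering d Δ k P)
    (Q : Fin k → Finset (HPt d)) : Prop :=
  IsExtension pc Q ∧ ∀ Q', IsExtension pc Q' → extVal pc Q ≤ extVal pc Q'

/-- A safe extension. -/
def IsSafe (pc : PartialClustering d Δ k P) (Q : Fin k → Finset (HPt d)) : Prop :=
  ∀ x ∈ Rset pc, ∀ i j : Fin k, Dom x ⊆ pc.I i → Dom x ⊆ pc.I j → x ∈ Q i →
    dH x (centers pc Q i) ≤ dH x (centers pc Q j)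

/-- `Z` is a `t`-useless set of coordinates for the pair `(i,j)` and extension `Q`.
For pairs with `I i = ∅` or `I j ≠ ∅` it is by definition the empty set. -/
def IsUseless (pc : PartialClustering d Δ k P) (Q : Fin k → Finset (HPt d))
    (t : ℝ) (i j : Fin k) (Z : Finset (Fin d)) : Prop :=
  Z ⊆ pc.I i ∧
  (((pc.I i).Nonempty ∧ pc.I j = ∅) →
    (Z = ∅ ∨ d - Δ ≤ Z.card) ∧
    f2I Z (Q j ∩ Rset pc) (pc.u i) - f2I Z (Q j ∩ Rset pc) (centers pc Q j)
      ≤ t * OPT pc) ∧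
  (¬ ((pc.I i).Nonempty ∧ pc.I j = ∅) → Z = ∅)

/-- `Z` is compatible with the extension `Q` (for the pair `(i,j)`). -/
def Compatible (pc : PartialClustering d Δ k P) (Q : Fin k → Finset (HPt d))
    (i j : Fin k) (Z : Finset (Fin d)) : Prop :=
  (∀ x ∈ Q j, ¬ Dom x ⊆ pc.I j → ¬ Dom x ⊆ Z) ∧
  (∀ x ∈ Q j, Dom x ⊆ pc.I i → ¬ dH x (pc.u i) < dH x (centers pc Q j) / 2)

open scoped Classical in
/-- The elements of `FD(S, I)` at distance at most `ρ` from `u`. -/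
noncomputable def ballFD (S : Finset (HPt d)) (I : Finset (Fin d))
    (u : HPt d) (ρ : ℝ) : Finset (HPt d) :=
  (FD S I).filter fun x => dH x u ≤ ρ



/-!
The inequality splits over the coordinates `i ∈ I`. Only the points of `PD(P, {i})` contribute
to coordinate `i`, and `c(P)_i` is their mean, so the parallel axis identity
`∑ (v_p - a)² = ∑ (v_p - mean)² + n (a - mean)²` bounds the `i`-th term by its value at `c(P)`
plus `|PD(P, {i})| (x_i - c(P)_i)²`. Finally `PD(P, {i}) ⊆ PD(P, I)` and the coordinates in `I`
contribute at most `d(x, c(P))²`.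
-/

theorem sum_sq_sub_eq_sum_sq_sub_mean_add {ι : Type*} (s : Finset ι) (v : ι → ℝ)
    (a : ℝ) :
    ∑ p ∈ s, (v p - a) ^ 2 =
      ∑ p ∈ s, (v p - (∑ q ∈ s, v q) / s.card) ^ 2
        + s.card * (a - (∑ q ∈ s, v q) / s.card) ^ 2 := by
  rcases s.eq_empty_or_nonempty with rfl | hs
  · simp
  set m := (∑ q ∈ s, v q) / s.card
  have hsum : ∑ q ∈ s, v q = s.card * m := by
    rw [mul_div_cancel₀ _ (by exact_mod_cast hs.card_pos.ne')]
  have hcross : ∑ p ∈ s, 2 * (m - a) * (v p - m) = 0 := by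
    rw [← mul_sum, sum_sub_distrib, sum_const, nsmul_eq_mul, hsum, sub_self, mul_zero]
  calc ∑ p ∈ s, (v p - a) ^ 2
      = ∑ p ∈ s, ((v p - m) ^ 2 + (a - m) ^ 2 + 2 * (m - a) * (v p - m)) :=
        sum_congr rfl fun p _ => by ring
    _ = ∑ p ∈ s, (v p - m) ^ 2 + s.card * (a - m) ^ 2 := by
        rw [sum_add_distrib, sum_add_distrib, hcross, add_zero, sum_const, nsmul_eq_mul]

variable {d : ℕ}

theorem coordSq_nonneg (a b : Option ℝ) : 0 ≤ coordSq a b := by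
  cases a <;> cases b <;> first | exact le_rfl | exact sq_nonneg _

@[simp]
theorem coordSq_none_left (b : Option ℝ) : coordSq none b = 0 := rfl

@[simp]
theorem coordSq_none_right (a : Option ℝ) : coordSq a none = 0 := by
  cases a <;> rfl

theorem dI_sq (I : Finset (Fin d)) (x y : HPt d) :
    dI I x y ^ 2 = ∑ i ∈ I, coordSq (x i) (y i) :=
  Real.sq_sqrt (sum_nonneg fun _ _ => coordSq_nonneg _ _)

theorem sum_coordSq_le_dH_sq (I : Finset (Fin d)) (x y : HPt d) :
    ∑ i ∈ I, coordSq (x i) (y i) ≤ dH x y ^ 2 := by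
  rw [dH, dI_sq]
  exact sum_le_sum_of_subset_of_nonneg (subset_univ I) fun i _ _ => coordSq_nonneg _ _

theorem f2I_eq_sum_sum (I : Finset (Fin d)) (P : Finset (HPt d)) (y : HPt d) :
    f2I I P y = ∑ i ∈ I, ∑ p ∈ P, coordSq (p i) (y i) := by
  rw [f2I, sum_comm]
  exact sum_congr rfl fun p _ => dI_sq I p y

theorem mem_PD_singleton {P : Finset (HPt d)} {p : HPt d} {i : Fin d} :
    p ∈ PD P {i} ↔ p ∈ P ∧ p i ≠ none := by
  simp [PD, Dom, Finset.Nonempty]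

theorem PD_singleton_subset {P : Finset (HPt d)} {I : Finset (Fin d)} {i : Fin d}
    (hi : i ∈ I) : PD P {i} ⊆ PD P I := by
  intro p hp
  obtain ⟨hpP, hpi⟩ := mem_PD_singleton.mp hp
  exact mem_filter.mpr ⟨hpP, i, mem_inter.mpr ⟨by simpa [Dom] using hpi, hi⟩⟩

theorem sum_coordSq_eq_sum_PD (P : Finset (HPt d)) (i : Fin d) (z : Option ℝ) :
    ∑ p ∈ P, coordSq (p i) z = ∑ p ∈ PD P {i}, coordSq (p i) z := by
  refine (sum_subset (filter_subset _ _) fun p hp hpi => ?_).symm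
  have : p i = none := by
    by_contra h
    exact hpi (mem_PD_singleton.mpr ⟨hp, h⟩)
  rw [this, coordSq_none_left]

theorem sum_PD_coordSq_some (P : Finset (HPt d)) (i : Fin d) (a : ℝ) :
    ∑ p ∈ PD P {i}, coordSq (p i) (some a) = ∑ p ∈ PD P {i}, ((p i).getD 0 - a) ^ 2 := by
  refine sum_congr rfl fun p hp => ?_
  obtain ⟨b, hb⟩ := Option.ne_none_iff_exists'.mp (mem_PD_singleton.mp hp).2
  simp [hb, coordSq]

theorem cP_apply_of_nonempty {P : Finset (HPt d)} {i : Fin d} (h : (PD P {i}).Nonempty) :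
    cP P i = some ((∑ p ∈ PD P {i}, (p i).getD 0) / (PD P {i}).card) := by
  simp [cP, cI, h]

theorem sum_coordSq_le_sum_coordSq_cP_add (P : Finset (HPt d)) (i : Fin d) (z : Option ℝ) :
    ∑ p ∈ P, coordSq (p i) z ≤
      ∑ p ∈ P, coordSq (p i) (cP P i) + (PD P {i}).card * coordSq z (cP P i) := by
  rw [sum_coordSq_eq_sum_PD P i z, sum_coordSq_eq_sum_PD P i (cP P i)]
  rcases (PD P {i}).eq_empty_or_nonempty with hT | hT
  · simp [hT]
  cases z with
  | none =>
    simpa using sum_nonneg fun p _ => coordSq_nonneg (p i) (cP P i)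
  | some a =>
    rw [cP_apply_of_nonempty hT, sum_PD_coordSq_some, sum_PD_coordSq_some, coordSq]
    exact (sum_sq_sub_eq_sum_sq_sub_mean_add _ _ a).le

theorem stmt_1_general {d : ℕ}
    (P : Finset (HPt d)) (I : Finset (Fin d)) (x : HPt d) :
    f2I I P x ≤ f2I I P (cP P) + ((PD P I).card : ℝ) * dH x (cP P) ^ 2 := by
  have hcoord (i) (hi : i ∈ I) : ∑ p ∈ P, coordSq (p i) (x i) ≤
      ∑ p ∈ P, coordSq (p i) (cP P i) + (PD P I).card * coordSq (x i) (cP P i) := by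
    have hcard : ((PD P {i}).card : ℝ) ≤ (PD P I).card := by
      exact_mod_cast card_le_card (PD_singleton_subset hi)
    have := mul_le_mul_of_nonneg_right hcard (coordSq_nonneg (x i) (cP P i))
    linarith [sum_coordSq_le_sum_coordSq_cP_add P i (x i)]
  calc f2I I P x
      ≤ ∑ i ∈ I, (∑ p ∈ P, coordSq (p i) (cP P i) + (PD P I).card * coordSq (x i) (cP P i)) := by
        rw [f2I_eq_sum_sum]
        exact sum_le_sum hcoord
    _ = f2I I P (cP P) + (PD P I).card * ∑ i ∈ I, coordSq (x i) (cP P i) := by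
        rw [sum_add_distrib, ← mul_sum, f2I_eq_sum_sum]
    _ ≤ f2I I P (cP P) + (PD P I).card * dH x (cP P) ^ 2 := by
        gcongr
        exact sum_coordSq_le_dH_sq I x (cP P)

/-- Lemma 1, inequality part. -/
theorem stmt_1 {d Δ : ℕ} (hd : 1 ≤ d) (hΔ : Δ < d)
    (P : Finset (HPt d)) (I : Finset (Fin d)) (x : HPt d) (hx : I ⊆ Dom x) :
    f2I I P x ≤ f2I I P (cP P) + ((PD P I).card : ℝ) * dH x (cP P) ^ 2 :=
  stmt_1_general P I x

end KMD
end

section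
/- Let 𝒫 = {(n_i), (H_i), (I_i), (u_i)}_{i∈[k]} be a partial clustering such that no point x ∈ R satisfies Dom(x) ⊆ I_i for every i ∈ [k]. If Σ_{i∈[k]} n_i = k(Δ+1), then ∪_{i∈[k]} H_i = P. -/
open Finset

namespace KMD

variable {d : ℕ}

variable {Δ k : ℕ} {P : Finset (HPt d)}

/-! Each `n i` is at most `Δ + 1`, so the sum condition forces `n i = Δ + 1` for every `i`; then
`|I i| ≥ d`, i.e. `I i = [d]`. A point of `R` would have its domain inside every `I i`, so `R` is
empty and the `H i` cover `P`. -/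

namespace PartialClustering

variable (pc : PartialClustering d Δ k P)

theorem n_eq_of_sum_eq (hsum : ∑ i, pc.n i = k * (Δ + 1)) (i : Fin k) : pc.n i = Δ + 1 := by
  have hsum' : ∑ i, pc.n i = ∑ _i : Fin k, (Δ + 1) := by simpa using hsum
  exact (Finset.sum_eq_sum_iff_of_le fun j _ => pc.n_le j).mp hsum' i (mem_univ i)

theorem I_eq_univ_of_n_eq {i : Fin k} (hi : pc.n i = Δ + 1) : pc.I i = univ := by
  have hcard := pc.I_card i (by omega)
  rw [hi] at hcard
  exact eq_univ_of_card _ (le_antisymm (card_le_univ _) (by simp only [Fintype.card_fin]; omega))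

theorem biUnion_H_eq_of_Rset_eq_empty (hR : Rset pc = ∅) : univ.biUnion pc.H = P :=
  Subset.antisymm (biUnion_subset.mpr fun i _ => pc.H_sub i) (sdiff_eq_empty_iff_subset.mp hR)

end PartialClustering

theorem stmt_4_general {d Δ k : ℕ}
    {P : Finset (HPt d)}
    (pc : PartialClustering d Δ k P)
    (hnone : ∀ x ∈ Rset pc, ¬ ∀ i : Fin k, Dom x ⊆ pc.I i)
    (hsum : ∑ i, pc.n i = k * (Δ + 1)) :
    Finset.univ.biUnion pc.H = P := by
  have hI : ∀ i, pc.I i = univ := fun i => pc.I_eq_univ_of_n_eq (pc.n_eq_of_sum_eq hsum i)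
  apply pc.biUnion_H_eq_of_Rset_eq_empty
  exact eq_empty_of_forall_notMem fun x hx => hnone x hx fun i => hI i ▸ subset_univ _

/-- Observation 2: if `Σ n_i = k(Δ+1)` then all points are assigned. -/
theorem stmt_4 {d Δ k : ℕ} (hd : 1 ≤ d) (hΔ : Δ < d) (hk : 1 ≤ k)
    {P : Finset (HPt d)} (hP : ∀ y ∈ P, IsDeltaPt Δ y ∧ (Dom y).Nonempty)
    (pc : PartialClustering d Δ k P)
    (hnone : ∀ x ∈ Rset pc, ¬ ∀ i : Fin k, Dom x ⊆ pc.I i)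
    (hsum : ∑ i, pc.n i = k * (Δ + 1)) :
    Finset.univ.biUnion pc.H = P :=
  stmt_4_general pc hnone hsum

end KMD
end

section
/- Let Δ ≥ 1, let S be a finite nonempty set of Δ-points in ℍ^d, and let δ = 1/(2Δ). Then there exist a set L ⊆ [d] with |L| ≤ Δ and a subset F ⊆ S with |F| ≥ (1 − δ)^Δ·|S| ≥ |S|/2 such that every x ∈ F satisfies x_i = ? for every i ∈ L, and for every coordinate i ∈ [d] − L the number of points x ∈ F with x_i = ? is at most (1 − δ)·|F|. -/
open Finset

namespace KMD

variable {d : ℕ}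

variable {Δ k : ℕ} {P : Finset (HPt d)}

/- Greedy peeling: while some coordinate `i ∉ L` is missing in more than a `q`-fraction of `F`,
put `i` into `L` and shrink `F` to the points missing `i`. Each step keeps a `q`-fraction of `F`,
and since the points of a nonempty `F` miss every coordinate of `L`, the `Δ`-point condition
forces `|L| ≤ Δ`, so the process stops after at most `Δ` steps. For `q = 1 - 1/(2Δ)`,
Bernoulli's inequality gives `q ^ Δ ≥ 1 - Δ/(2Δ) = 1/2`. -/

theorem IsDeltaPt.card_le_of_forall_eq_none {Δ : ℕ} {x : HPt d} (hx : IsDeltaPt Δ x)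
    {L : Finset (Fin d)} (hL : ∀ i ∈ L, x i = none) : L.card ≤ Δ :=
  (card_le_card fun i hi => mem_filter.mpr ⟨mem_univ i, hL i hi⟩).trans hx

open scoped Classical in
theorem exists_balanced_of_peeled {Δ : ℕ} {S : Finset (HPt d)} (hSΔ : ∀ x ∈ S, IsDeltaPt Δ x)
    {q : ℝ} (hq0 : 0 ≤ q) (hq1 : q ≤ 1) (L : Finset (Fin d)) (F : Finset (HPt d))
    (hLΔ : L.card ≤ Δ) (hFS : F ⊆ S) (hFL : ∀ x ∈ F, ∀ i ∈ L, x i = none)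
    (hF : q ^ L.card * (S.card : ℝ) ≤ F.card) :
    ∃ (L' : Finset (Fin d)) (F' : Finset (HPt d)),
      L'.card ≤ Δ ∧ F' ⊆ S ∧ q ^ Δ * (S.card : ℝ) ≤ F'.card ∧
      (∀ x ∈ F', ∀ i ∈ L', x i = none) ∧
      ∀ i ∈ univ \ L', ((F'.filter fun x => x i = none).card : ℝ) ≤ q * F'.card := by
  by_cases hbal : ∀ i ∈ univ \ L, ((F.filter fun x => x i = none).card : ℝ) ≤ q * F.card
  · refine ⟨L, F, hLΔ, hFS, ?_, hFL, hbal⟩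
    calc q ^ Δ * (S.card : ℝ) ≤ q ^ L.card * S.card := by
          gcongr ?_ * _
          exact pow_le_pow_of_le_one hq0 hq1 hLΔ
      _ ≤ F.card := hF
  push Not at hbal
  obtain ⟨i, hi, hbig⟩ := hbal
  have hiL : i ∉ L := (mem_sdiff.mp hi).2
  set F' := F.filter fun x => x i = none
  have hF'L : ∀ x ∈ F', ∀ j ∈ insert i L, x j = none := by
    intro x hx j hj
    obtain ⟨hxF, hxi⟩ := mem_filter.mp hx
    rcases mem_insert.mp hj with rfl | hj
    exacts [hxi, hFL x hxF j hj]
  have hF'ne : F'.Nonempty := by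
    rw [← card_pos, ← Nat.cast_pos (α := ℝ)]
    exact lt_of_le_of_lt (by positivity) hbig
  obtain ⟨x, hx⟩ := hF'ne
  have hL'Δ : (insert i L).card ≤ Δ :=
    (hSΔ x (hFS (mem_filter.mp hx).1)).card_le_of_forall_eq_none (hF'L x hx)
  have hF' : q ^ (insert i L).card * (S.card : ℝ) ≤ F'.card := by
    rw [card_insert_of_notMem hiL, pow_succ', mul_assoc]
    exact (mul_le_mul_of_nonneg_left hF hq0).trans hbig.le
  exact exists_balanced_of_peeled hSΔ hq0 hq1 (insert i L) F' hL'Δ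
    ((filter_subset _ _).trans hFS) hF'L hF'
termination_by Δ - L.card
decreasing_by
  rw [card_insert_of_notMem hiL] at hL'Δ ⊢
  omega

theorem half_le_one_sub_inv_two_mul_pow (Δ : ℕ) : (1 : ℝ) / 2 ≤ (1 - 1 / (2 * Δ)) ^ Δ := by
  rcases Nat.eq_zero_or_pos Δ with rfl | hΔ
  · norm_num
  have hΔ' : (1 : ℝ) ≤ Δ := by exact_mod_cast hΔ
  have hδ : 1 / (2 * (Δ : ℝ)) ≤ 1 / 2 := by gcongr; linarith
  calc (1 : ℝ) / 2 = 1 + Δ * -(1 / (2 * Δ)) := by field_simp; ring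
    _ ≤ (1 + -(1 / (2 * Δ))) ^ Δ := one_add_mul_le_pow (by linarith) Δ
    _ = (1 - 1 / (2 * Δ)) ^ Δ := by rw [← sub_eq_add_neg]

open scoped Classical in
theorem stmt_19_general {d : ℕ} (Δ : ℕ)
    (S : Finset (HPt d)) (hSΔ : ∀ x ∈ S, IsDeltaPt Δ x)
    (δ : ℝ) (hδ : δ = 1 / (2 * Δ)) :
    ∃ (L : Finset (Fin d)) (F : Finset (HPt d)),
      L.card ≤ Δ ∧ F ⊆ S ∧
      (1 - δ) ^ Δ * (S.card : ℝ) ≤ (F.card : ℝ) ∧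
      (S.card : ℝ) / 2 ≤ (1 - δ) ^ Δ * (S.card : ℝ) ∧
      (∀ x ∈ F, ∀ i ∈ L, x i = none) ∧
      ∀ i ∈ Finset.univ \ L,
        ((F.filter fun x => x i = none).card : ℝ) ≤ (1 - δ) * (F.card : ℝ) := by
  have hhalf : (1 : ℝ) / 2 ≤ (1 - δ) ^ Δ := hδ ▸ half_le_one_sub_inv_two_mul_pow Δ
  have hδ0 : 0 ≤ δ := by rw [hδ]; positivity
  have hδ1 : δ ≤ 1 := by
    rcases Nat.eq_zero_or_pos Δ with rfl | hΔ
    · simp [hδ]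
    · rw [hδ, div_le_one (by positivity)]
      have : (1 : ℝ) ≤ Δ := by exact_mod_cast hΔ
      linarith
  obtain ⟨L, F, hLΔ, hFS, hF, hFL, hbal⟩ :=
    exists_balanced_of_peeled hSΔ (q := 1 - δ) (by linarith) (by linarith) ∅ S (by simp)
      subset_rfl (by simp) (by simp)
  refine ⟨L, F, hLΔ, hFS, hF, ?_, hFL, hbal⟩
  calc (S.card : ℝ) / 2 = 1 / 2 * S.card := by ring
    _ ≤ (1 - δ) ^ Δ * S.card := by gcongr

open scoped Classical in
/-- in any finite nonempty set `S` of `Δ`-points one can find at most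
`Δ` "bad" coordinates `L` and a large subset `F` all of whose points are missing
exactly on `L`-coordinates and, on every other coordinate, at most a `(1−δ)`
fraction of `F` is missing, where `δ = 1/(2Δ)`. -/
theorem stmt_19 {d : ℕ} (Δ : ℕ) (hΔ : 1 ≤ Δ) (hΔd : Δ < d)
    (S : Finset (HPt d)) (hS : S.Nonempty) (hSΔ : ∀ x ∈ S, IsDeltaPt Δ x)
    (δ : ℝ) (hδ : δ = 1 / (2 * Δ)) :
    ∃ (L : Finset (Fin d)) (F : Finset (HPt d)),
      L.card ≤ Δ ∧ F ⊆ S ∧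
      (1 - δ) ^ Δ * (S.card : ℝ) ≤ (F.card : ℝ) ∧
      (S.card : ℝ) / 2 ≤ (1 - δ) ^ Δ * (S.card : ℝ) ∧
      (∀ x ∈ F, ∀ i ∈ L, x i = none) ∧
      ∀ i ∈ Finset.univ \ L,
        ((F.filter fun x => x i = none).card : ℝ) ≤ (1 - δ) * (F.card : ℝ) :=
  stmt_19_general Δ S hSΔ δ hδ

end KMD
end
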